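/- arXiv:2209.09437 — 5 statements merged into one kernel-verified Lean document; each statement's English description precedes it below -/
import Mathlib

section
/- Let W be the real symmetric (m+n)×(m+n) saddle point matrix W = [[A, B], [Bᵀ, C]], where A ∈ ℝ^{m×m} is symmetric positive definite, B ∈ ℝ^{m×n}, and C ∈ ℝ^{n×n} is symmetric negative semidefinite. Then λ_max(W) + λ_min(W) ≥ λ_min(A) + λ_min(C), where λ_max(·) and λ_min(·) denote the maximum and minimum eigenvalues. -/
/-!
Let `λ = λ_min(W)` with unit eigenvector `(x, y)`, and `s = ‖x‖²`, `r = ‖y‖²`. The test vector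
`(r x, -s y)` is orthogonal to `(x, y)`; by the eigenvector equations its Rayleigh bound against
`λ_max(W)` reads `(λ_max(W) - λ) s r ≥ xᵀAx - λ s`. The right side equals `yᵀCy - λ r`, so it is
at least both `(λ_min(A) - λ) s` and `(λ_min(C) - λ) r`, hence at least
`s r (λ_min(A) + λ_min(C) - 2λ)`. If `s r = 0` the eigenvector lives in one block, and
`λ_min(A), λ_min(C) ≤ λ_max(W)` finish the proof.
-/

open Matrix

/-- A real matrix is negative semidefinite if it is symmetric (Hermitian) and its
quadratic form is nonpositive. -/
def Matrix.NegSemidefinite {k : Type*} [Fintype k] (M : Matrix k k ℝ) : Prop :=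
  M.IsHermitian ∧ ∀ x : k → ℝ, x ⬝ᵥ (M *ᵥ x) ≤ 0

/-- The maximum eigenvalue of a real symmetric matrix. -/
noncomputable def maxEig {k : Type*} [Fintype k] [DecidableEq k]
    {M : Matrix k k ℝ} (hM : M.IsHermitian) : ℝ :=
  ⨆ i, hM.eigenvalues i

/-- The minimum eigenvalue of a real symmetric matrix. -/
noncomputable def minEig {k : Type*} [Fintype k] [DecidableEq k]
    {M : Matrix k k ℝ} (hM : M.IsHermitian) : ℝ :=
  ⨅ i, hM.eigenvalues i

/-- The spectral radius of a real symmetric matrix: the maximum of the absolute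
values of its eigenvalues. -/
noncomputable def specRad {k : Type*} [Fintype k] [DecidableEq k]
    {M : Matrix k k ℝ} (hM : M.IsHermitian) : ℝ :=
  ⨆ i, |hM.eigenvalues i|

open scoped Pointwise

namespace Matrix.IsHermitian

variable {k : Type*} [Fintype k] [DecidableEq k] {M : Matrix k k ℝ}

lemma posSemidef_sub_algebraMap_iff (hM : M.IsHermitian) (c : ℝ) :
    (M - algebraMap ℝ _ c).PosSemidef ↔ ∀ i, c ≤ hM.eigenvalues i := by
  have h : (M - algebraMap ℝ _ c).IsHermitian := hM.sub (isHermitian_diagonal fun _ : k => c)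
  have key : Set.range h.eigenvalues = Set.range hM.eigenvalues - ({c} : Set ℝ) := by
    rw [← h.spectrum_real_eq_range_eigenvalues, ← hM.spectrum_real_eq_range_eigenvalues,
      spectrum.sub_singleton_eq]
  rw [h.posSemidef_iff_eigenvalues_nonneg, Pi.le_def]
  calc (∀ i, 0 ≤ h.eigenvalues i) ↔ ∀ x ∈ Set.range h.eigenvalues, 0 ≤ x :=
        Set.forall_mem_range.symm
    _ ↔ ∀ x ∈ (· - c) '' Set.range hM.eigenvalues, 0 ≤ x := by rw [key, Set.sub_singleton]
    _ ↔ ∀ i, c ≤ hM.eigenvalues i := by simp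

lemma posSemidef_algebraMap_sub_iff (hM : M.IsHermitian) (c : ℝ) :
    (algebraMap ℝ _ c - M).PosSemidef ↔ ∀ i, hM.eigenvalues i ≤ c := by
  have h : (algebraMap ℝ _ c - M).IsHermitian := (isHermitian_diagonal fun _ : k => c).sub hM
  have key : Set.range h.eigenvalues = ({c} : Set ℝ) - Set.range hM.eigenvalues := by
    rw [← h.spectrum_real_eq_range_eigenvalues, ← hM.spectrum_real_eq_range_eigenvalues,
      spectrum.singleton_sub_eq]
  rw [h.posSemidef_iff_eigenvalues_nonneg, Pi.le_def]
  calc (∀ i, 0 ≤ h.eigenvalues i) ↔ ∀ x ∈ Set.range h.eigenvalues, 0 ≤ x :=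
        Set.forall_mem_range.symm
    _ ↔ ∀ x ∈ (c - ·) '' Set.range hM.eigenvalues, 0 ≤ x := by rw [key, Set.singleton_sub]
    _ ↔ ∀ i, hM.eigenvalues i ≤ c := by simp

lemma minEig_mul_dotProduct_self_le (hM : M.IsHermitian) (x : k → ℝ) :
    minEig hM * (x ⬝ᵥ x) ≤ x ⬝ᵥ (M *ᵥ x) := by
  have hpsd := (hM.posSemidef_sub_algebraMap_iff _).2 fun i =>
    ciInf_le (Set.finite_range hM.eigenvalues).bddBelow i
  simpa [minEig, Algebra.algebraMap_eq_smul_one, sub_mulVec, smul_mulVec, dotProduct_sub] using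
    hpsd.dotProduct_mulVec_nonneg x

lemma dotProduct_mulVec_le_maxEig_mul (hM : M.IsHermitian) (x : k → ℝ) :
    x ⬝ᵥ (M *ᵥ x) ≤ maxEig hM * (x ⬝ᵥ x) := by
  have hpsd := (hM.posSemidef_algebraMap_sub_iff _).2 fun i =>
    le_ciSup (Set.finite_range hM.eigenvalues).bddAbove i
  simpa [maxEig, Algebra.algebraMap_eq_smul_one, sub_mulVec, smul_mulVec, dotProduct_sub] using
    hpsd.dotProduct_mulVec_nonneg x

lemma exists_mulVec_eq_minEig_smul [Nonempty k] (hM : M.IsHermitian) :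
    ∃ v : k → ℝ, v ⬝ᵥ v = 1 ∧ M *ᵥ v = minEig hM • v := by
  obtain ⟨i, hi⟩ := exists_eq_ciInf_of_finite (f := hM.eigenvalues)
  refine ⟨hM.eigenvectorBasis i, ?_, ?_⟩
  · have h := real_inner_self_eq_norm_sq (hM.eigenvectorBasis i)
    rw [hM.eigenvectorBasis.orthonormal.1 i, EuclideanSpace.inner_eq_star_dotProduct] at h
    simpa using h
  · rw [hM.mulVec_eigenvectorBasis, minEig, hi]

end Matrix.IsHermitian

/- `s, r` are the squared norms of the blocks of a unit eigenvector for `lam`, `a, b, c` the block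
quadratic forms, and `htest` the Rayleigh bound for the test vector `(r x, -s y)`. -/
lemma add_le_add_of_block_rayleigh {s r a b c lam mu α γ : ℝ} (hs : 0 ≤ s) (hr : 0 ≤ r)
    (hsr : s + r = 1) (hab : a + b = lam * s) (hbc : b + c = lam * r)
    (ha : α * s ≤ a) (hc : γ * r ≤ c) (hαμ : α ≤ mu) (hγμ : γ ≤ mu)
    (htest : r ^ 2 * a - 2 * (r * s) * b + s ^ 2 * c ≤ mu * (r ^ 2 * s + s ^ 2 * r)) :
    α + γ ≤ mu + lam := by
  have hgap : a - lam * s ≤ (mu - lam) * (s * r) := by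
    have hr' : r = 1 - s := by linarith
    have hb : b = lam * s - a := by linarith
    have hc' : c = lam * r - lam * s + a := by linarith
    subst hr' hb hc'
    linarith
  have hA : (α - lam) * s ≤ a - lam * s := by linarith
  have hC : (γ - lam) * r ≤ a - lam * s := by linarith
  rcases hs.eq_or_lt with rfl | hs
  · obtain rfl : r = 1 := by linarith
    linarith
  rcases hr.eq_or_lt with rfl | hr
  · obtain rfl : s = 1 := by linarith
    linarith
  have hmix : s * r * (α + γ - 2 * lam) ≤ (mu - lam) * (s * r) :=
    calc s * r * (α + γ - 2 * lam) = r * ((α - lam) * s) + s * ((γ - lam) * r) := by ring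
      _ ≤ r * (a - lam * s) + s * (a - lam * s) := by gcongr
      _ = a - lam * s := by linear_combination (a - lam * s) * hsr
      _ ≤ (mu - lam) * (s * r) := hgap
  nlinarith [mul_pos hs hr]

namespace Matrix

variable {m n R : Type*} [Fintype m] [Fintype n] [CommRing R]

lemma sumElim_dotProduct_fromBlocks_mulVec (A : Matrix m m R) (B : Matrix m n R)
    (C : Matrix n n R) (x : m → R) (y : n → R) :
    Sum.elim x y ⬝ᵥ (fromBlocks A B Bᵀ C *ᵥ Sum.elim x y) =
      x ⬝ᵥ (A *ᵥ x) + 2 * (x ⬝ᵥ (B *ᵥ y)) + y ⬝ᵥ (C *ᵥ y) := by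
  rw [fromBlocks_mulVec, Sum.elim_comp_inl, Sum.elim_comp_inr, sumElim_dotProduct_sumElim,
    dotProduct_add, dotProduct_add, dotProduct_mulVec y Bᵀ, vecMul_transpose,
    dotProduct_comm (B *ᵥ y)]
  ring

variable [DecidableEq m] [DecidableEq n] {A : Matrix m m ℝ} {B : Matrix m n ℝ} {C : Matrix n n ℝ}

lemma minEig_le_maxEig_fromBlocks_left [Nonempty m] (hA : A.IsHermitian)
    (hW : (fromBlocks A B Bᵀ C).IsHermitian) : minEig hA ≤ maxEig hW := by
  obtain ⟨v, hv, hAv⟩ := hA.exists_mulVec_eq_minEig_smul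
  simpa [sumElim_dotProduct_fromBlocks_mulVec, hAv, hv, sumElim_dotProduct_sumElim] using
    hW.dotProduct_mulVec_le_maxEig_mul (Sum.elim v 0)

lemma minEig_le_maxEig_fromBlocks_right [Nonempty n] (hC : C.IsHermitian)
    (hW : (fromBlocks A B Bᵀ C).IsHermitian) : minEig hC ≤ maxEig hW := by
  obtain ⟨v, hv, hCv⟩ := hC.exists_mulVec_eq_minEig_smul
  simpa [sumElim_dotProduct_fromBlocks_mulVec, hCv, hv, sumElim_dotProduct_sumElim] using
    hW.dotProduct_mulVec_le_maxEig_mul (Sum.elim 0 v)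

theorem minEig_add_minEig_le_maxEig_add_minEig_fromBlocks [Nonempty m] [Nonempty n]
    (hA : A.IsHermitian) (hC : C.IsHermitian) (hW : (fromBlocks A B Bᵀ C).IsHermitian) :
    minEig hA + minEig hC ≤ maxEig hW + minEig hW := by
  obtain ⟨z, hz, hWz⟩ := hW.exists_mulVec_eq_minEig_smul
  obtain ⟨x, y, rfl⟩ : ∃ x y, Sum.elim x y = z := ⟨_, _, Sum.elim_comp_inl_inr z⟩
  have hWx : A *ᵥ x + B *ᵥ y = minEig hW • x := by
    funext i
    simpa [fromBlocks_mulVec] using congrFun hWz (Sum.inl i)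
  have hWy : Bᵀ *ᵥ x + C *ᵥ y = minEig hW • y := by
    funext j
    simpa [fromBlocks_mulVec] using congrFun hWz (Sum.inr j)
  have hx : x ⬝ᵥ (A *ᵥ x) + x ⬝ᵥ (B *ᵥ y) = minEig hW * (x ⬝ᵥ x) := by
    simpa [dotProduct_add] using congrArg (x ⬝ᵥ ·) hWx
  have hy : x ⬝ᵥ (B *ᵥ y) + y ⬝ᵥ (C *ᵥ y) = minEig hW * (y ⬝ᵥ y) := by
    simpa [dotProduct_add, dotProduct_mulVec y Bᵀ, vecMul_transpose, dotProduct_comm (B *ᵥ y)]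
      using congrArg (y ⬝ᵥ ·) hWy
  have htest := hW.dotProduct_mulVec_le_maxEig_mul (Sum.elim ((y ⬝ᵥ y) • x) (-(x ⬝ᵥ x) • y))
  simp only [sumElim_dotProduct_fromBlocks_mulVec, sumElim_dotProduct_sumElim, mulVec_smul,
    dotProduct_smul, smul_dotProduct, smul_eq_mul] at htest
  rw [sumElim_dotProduct_sumElim] at hz
  refine add_le_add_of_block_rayleigh (dotProduct_self_star_nonneg x)
    (dotProduct_self_star_nonneg y) hz hx hy
    (hA.minEig_mul_dotProduct_self_le x) (hC.minEig_mul_dotProduct_self_le y)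
    (minEig_le_maxEig_fromBlocks_left hA hW) (minEig_le_maxEig_fromBlocks_right hC hW) ?_
  linear_combination htest

end Matrix

theorem stmt_5 (m n : ℕ) (hm : 0 < m) (hn : 0 < n)
    (A : Matrix (Fin m) (Fin m) ℝ) (B : Matrix (Fin m) (Fin n) ℝ)
    (C : Matrix (Fin n) (Fin n) ℝ)
    (hA : A.PosDef) (hC : C.NegSemidefinite)
    (hW : (fromBlocks A B Bᵀ C).IsHermitian) :
    minEig hA.isHermitian + minEig hC.1 ≤ maxEig hW + minEig hW := by
  have : Nonempty (Fin m) := Fin.pos_iff_nonempty.mp hm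
  have : Nonempty (Fin n) := Fin.pos_iff_nonempty.mp hn
  exact minEig_add_minEig_le_maxEig_add_minEig_fromBlocks hA.isHermitian hC.1 hW
end

section
/- Let W be the real symmetric (m+n)×(m+n) saddle point matrix W = [[A, B], [Bᵀ, C]], where A ∈ ℝ^{m×m} is symmetric positive definite, B ∈ ℝ^{m×n}, and C ∈ ℝ^{n×n} is symmetric negative semidefinite. List the eigenvalues of W in decreasing order λ_1(W) ≥ λ_2(W) ≥ ... ≥ λ_{m+n}(W), counted with multiplicity. Then λ_{m+1}(W) ≤ 0 < λ_m(W); that is, W has at least m positive eigenvalues and at least n nonpositive eigenvalues (with multiplicity). -/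
open Matrix

/-!
The quadratic form of `W = [[A, B], [Bᵀ, C]]` is positive definite on the `m`-dimensional subspace
`{(x, 0)}`, and on the `n`-dimensional graph `{(-A⁻¹ B y, y)}` it equals the Schur complement form
`y ⬝ C y - (B y) ⬝ A⁻¹ (B y) ≤ 0`. Hence the maximal dimension of a subspace on which the form is
positive definite is exactly `m`. Diagonalising `W` by an orthogonal matrix turns its form into
`∑ λᵢ xᵢ²`, for which that dimension is the number of positive eigenvalues (Sylvester's law of
inertia).
-/

open QuadraticMap QuadraticForm Module

namespace QuadraticForm

variable {𝕜 M V : Type*} [Field 𝕜] [LinearOrder 𝕜] [AddCommGroup M] [Module 𝕜 M]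
  [FiniteDimensional 𝕜 M] [AddCommGroup V] [Module 𝕜 V] {Q : QuadraticForm 𝕜 M}
  {f : V →ₗ[𝕜] M}

lemma finrank_le_sigPos_of_posDef_comp (hf : Function.Injective f) (hQf : (Q.comp f).PosDef) :
    finrank 𝕜 V ≤ sigPos Q := by
  rw [← LinearMap.finrank_range_of_inj hf]
  refine le_sigPos_of_posDef Q fun ⟨x, v, hv⟩ hx => ?_
  subst hv
  have hv : v ≠ 0 := by rintro rfl; exact hx (by simp)
  simpa using hQf v hv

lemma sigPos_add_finrank_le_of_comp_nonpos (hf : Function.Injective f) (hQf : ∀ v, Q (f v) ≤ 0) :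
    sigPos Q + finrank 𝕜 V ≤ finrank 𝕜 M := by
  rw [← LinearMap.finrank_range_of_inj hf]
  exact sigPos_add_finrank_le_of_nonpos (by rintro _ ⟨v, rfl⟩; exact hQf v)

end QuadraticForm

namespace Matrix

lemma toQuadraticForm'_apply {ι R : Type*} [Fintype ι] [DecidableEq ι] [CommRing R]
    (M : Matrix ι ι R) (x : ι → R) : M.toQuadraticForm' x = x ⬝ᵥ M *ᵥ x := by
  simp [toQuadraticForm', toLinearMap₂'_apply']

namespace IsHermitian

variable {ι : Type*} [Fintype ι] [DecidableEq ι] {M : Matrix ι ι ℝ}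

lemma toQuadraticForm'_eigenvectorUnitary_mulVec (hM : M.IsHermitian) (x : ι → ℝ) :
    M.toQuadraticForm' (hM.eigenvectorUnitary *ᵥ x) = weightedSumSquares ℝ hM.eigenvalues x := by
  have hdiag := hM.conjStarAlgAut_star_eigenvectorUnitary
  rw [Unitary.conjStarAlgAut_star_apply, star_eq_conjTranspose,
    conjTranspose_eq_transpose_of_trivial] at hdiag
  set U : Matrix ι ι ℝ := (hM.eigenvectorUnitary : Matrix ι ι ℝ)
  calc M.toQuadraticForm' (U *ᵥ x) = x ⬝ᵥ (Uᵀ * M * U) *ᵥ x := by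
        rw [toQuadraticForm'_apply, ← mulVec_mulVec, ← mulVec_mulVec, dotProduct_mulVec x Uᵀ,
          vecMul_transpose]
    _ = weightedSumSquares ℝ hM.eigenvalues x := by
        simp only [hdiag, weightedSumSquares_apply, dotProduct, mulVec_diagonal,
          Function.comp_apply, RCLike.ofReal_real_eq_id, id, smul_eq_mul]
        exact Finset.sum_congr rfl fun i _ => by ring

lemma equivalent_weightedSumSquares (hM : M.IsHermitian) :
    (weightedSumSquares ℝ hM.eigenvalues).Equivalent M.toQuadraticForm' :=
  ⟨⟨UnitaryGroup.toLinearEquiv hM.eigenvectorUnitary,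
    hM.toQuadraticForm'_eigenvectorUnitary_mulVec⟩⟩

lemma sigPos_toQuadraticForm' (hM : M.IsHermitian) :
    sigPos M.toQuadraticForm' = {i | 0 < hM.eigenvalues i}.ncard :=
  sigPos_of_equiv_weightedSumSquares hM.equivalent_weightedSumSquares.symm

end IsHermitian

variable {m n R : Type*} [Fintype m] [Fintype n] [CommRing R]

lemma sumElim_zero_dotProduct_fromBlocks_mulVec (A : Matrix m m R) (B : Matrix m n R)
    (C : Matrix n m R) (D : Matrix n n R) (x : m → R) :
    Sum.elim x 0 ⬝ᵥ fromBlocks A B C D *ᵥ Sum.elim x 0 = x ⬝ᵥ A *ᵥ x := by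
  simp [fromBlocks_mulVec, sumElim_dotProduct_sumElim]

lemma dotProduct_fromBlocks_mulVec_schur [DecidableEq m] {A : Matrix m m R} (hA : IsUnit A.det)
    (B : Matrix m n R) (C : Matrix n n R) (y : n → R) :
    Sum.elim (-((A⁻¹ * B) *ᵥ y)) y ⬝ᵥ fromBlocks A B Bᵀ C *ᵥ Sum.elim (-((A⁻¹ * B) *ᵥ y)) y =
      y ⬝ᵥ C *ᵥ y - (B *ᵥ y) ⬝ᵥ A⁻¹ *ᵥ (B *ᵥ y) := by
  have hfirst : A *ᵥ -((A⁻¹ * B) *ᵥ y) + B *ᵥ y = 0 := by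
    rw [mulVec_neg, mulVec_mulVec, ← Matrix.mul_assoc, mul_nonsing_inv A hA, Matrix.one_mul,
      neg_add_cancel]
  rw [fromBlocks_mulVec, Sum.elim_comp_inl, Sum.elim_comp_inr, hfirst, sumElim_dotProduct_sumElim,
    dotProduct_zero, zero_add, dotProduct_add, mulVec_neg, dotProduct_neg, dotProduct_mulVec,
    vecMul_transpose, ← mulVec_mulVec]
  ring

lemma sigPos_toQuadraticForm'_fromBlocks [DecidableEq m] [DecidableEq n] {A : Matrix m m ℝ}
    (hA : A.PosDef) (B : Matrix m n ℝ) {C : Matrix n n ℝ} (hC : ∀ y, y ⬝ᵥ C *ᵥ y ≤ 0) :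
    sigPos (fromBlocks A B Bᵀ C).toQuadraticForm' = Fintype.card m := by
  let e := (LinearEquiv.sumArrowLequivProdArrow m n ℝ ℝ).symm
  apply le_antisymm
  · let f := e.toLinearMap ∘ₗ (-(A⁻¹ * B).mulVecLin).prod LinearMap.id
    have hf : Function.Injective f := fun y z h => by simpa using congrArg Prod.snd (e.injective h)
    have hnonpos (y : n → ℝ) : (fromBlocks A B Bᵀ C).toQuadraticForm' (f y) ≤ 0 := by
      have hBy := hA.inv.posSemidef.dotProduct_mulVec_nonneg (B *ᵥ y)
      rw [star_trivial] at hBy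
      have hschur :=
        dotProduct_fromBlocks_mulVec_schur ((isUnit_iff_isUnit_det A).mp hA.isUnit) B C y
      rw [toQuadraticForm'_apply]
      exact hschur.trans_le (by linarith [hC y])
    simpa using sigPos_add_finrank_le_of_comp_nonpos hf hnonpos
  · let f := e.toLinearMap ∘ₗ LinearMap.inl ℝ (m → ℝ) (n → ℝ)
    have hf : Function.Injective f := fun x z h => by simpa using congrArg Prod.fst (e.injective h)
    refine (finrank_le_sigPos_of_posDef_comp hf fun x hx => ?_).trans_eq' (by simp)
    have hAx := hA.dotProduct_mulVec_pos hx
    rw [star_trivial] at hAx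
    rw [QuadraticMap.comp_apply, toQuadraticForm'_apply]
    exact (sumElim_zero_dotProduct_fromBlocks_mulVec A B Bᵀ C x).trans_gt hAx

end Matrix

theorem stmt_9_general (m n : ℕ)
    (A : Matrix (Fin m) (Fin m) ℝ) (B : Matrix (Fin m) (Fin n) ℝ)
    (C : Matrix (Fin n) (Fin n) ℝ)
    (hA : A.PosDef) (hC : C.NegSemidefinite)
    (hW : (fromBlocks A B Bᵀ C).IsHermitian) :
    m ≤ Set.ncard {i : Fin m ⊕ Fin n | 0 < hW.eigenvalues i} ∧
    n ≤ Set.ncard {i : Fin m ⊕ Fin n | hW.eigenvalues i ≤ 0} := by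
  have hpos : {i | 0 < hW.eigenvalues i}.ncard = m := by
    rw [← hW.sigPos_toQuadraticForm', sigPos_toQuadraticForm'_fromBlocks hA B hC.2,
      Fintype.card_fin]
  have hsplit :
      {i | 0 < hW.eigenvalues i}.ncard + {i | hW.eigenvalues i ≤ 0}.ncard = m + n := by
    simpa [Set.compl_ofPred, not_lt] using Set.ncard_add_ncard_compl {i | 0 < hW.eigenvalues i}
  omega

theorem stmt_9 (m n : ℕ) (hm : 0 < m) (hn : 0 < n)
    (A : Matrix (Fin m) (Fin m) ℝ) (B : Matrix (Fin m) (Fin n) ℝ)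
    (C : Matrix (Fin n) (Fin n) ℝ)
    (hA : A.PosDef) (hC : C.NegSemidefinite)
    (hW : (fromBlocks A B Bᵀ C).IsHermitian) :
    m ≤ Set.ncard {i : Fin m ⊕ Fin n | 0 < hW.eigenvalues i} ∧
    n ≤ Set.ncard {i : Fin m ⊕ Fin n | hW.eigenvalues i ≤ 0} :=
  stmt_9_general m n A B C hA hC hW
end

section
/- Let η > 0, let B ∈ ℝ^{m×n} with m ≥ n have rank n − r, and let W = [[ηI, B], [Bᵀ, O]] be the (m+n)×(m+n) real symmetric block matrix where I is the m×m identity matrix and O is the n×n zero matrix. Let σ_1 ≥ σ_2 ≥ ... ≥ σ_n ≥ 0 be the singular values of B (so σ_k > 0 exactly for k ≤ n − r). Then the m+n eigenvalues of W, counted with multiplicity, are: 0 with multiplicity r, η with multiplicity m − n + r, and the 2(n − r) numbers ½(η ± √(4σ_k² + η²)) for k = 1, ..., n − r. -/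
open Matrix

/-! For `x ≠ η` the block `(x - η) • 1` of `x • 1 - W` is invertible, and the Schur complement
gives `det (x • 1 - W) = (x - η) ^ (m - n) * det ((x * (x - η)) • 1 - Bᵀ * B)`. So each eigenvalue
`μ = σ²` of `Bᵀ * B` contributes the two roots `(η ± √(4μ + η²)) / 2` of `x * (x - η) = μ`
(for `σ = 0` these are `η` and `0`), and `η` accounts for the other `m - n` roots. Two
polynomials agreeing off `η` are equal, so the characteristic polynomials, and with them the
eigenvalue multisets, coincide. -/

open Polynomial

theorem Polynomial.eq_of_eval_eq_of_ne {R : Type*} [CommRing R] [IsDomain R] [Infinite R]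
    {p q : R[X]} (a : R) (h : ∀ x ≠ a, p.eval x = q.eval x) : p = q :=
  eq_of_infinite_eval_eq p q <| (Set.finite_singleton a).infinite_compl.mono fun x hx => h x hx

section
variable {K : Type*} [Field K] {m n : Type*} [Fintype m] [Fintype n] [DecidableEq m]
  [DecidableEq n]

theorem Matrix.det_fromBlocks_smul_one₁₁ {a : K} (ha : a ≠ 0) (B : Matrix m n K)
    (C : Matrix n m K) (D : Matrix n n K) :
    (fromBlocks (a • 1) B C D).det = a ^ Fintype.card m * (D - a⁻¹ • (C * B)).det := by
  have hinv : (a⁻¹ • (1 : Matrix m m K)) * (a • 1) = 1 := by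
    rw [smul_mul_smul_comm, inv_mul_cancel₀ ha, one_smul, Matrix.one_mul]
  let _ : Invertible (a • (1 : Matrix m m K)) :=
    invertibleOfLeftInverse _ (a⁻¹ • 1) hinv
  rw [det_fromBlocks₁₁, det_smul, det_one, mul_one, invOf_eq_left_inv hinv]
  simp [Matrix.mul_smul, Matrix.smul_mul]

theorem Matrix.eval_charpoly_fromBlocks_transpose {η x : K} (hx : x ≠ η) (B : Matrix m n K)
    (hmn : Fintype.card n ≤ Fintype.card m) :
    (fromBlocks (η • 1) B Bᵀ 0).charpoly.eval x
      = (x - η) ^ (Fintype.card m - Fintype.card n) * (Bᵀ * B).charpoly.eval (x * (x - η)) := by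
  have hxη : x - η ≠ 0 := sub_ne_zero.mpr hx
  have hblocks : scalar (m ⊕ n) x - fromBlocks (η • 1) B Bᵀ 0
      = fromBlocks ((x - η) • 1) (-B) (-Bᵀ) (scalar n x) := by
    ext (i | i) (j | j) <;> simp [one_apply, sub_smul, diagonal_apply]
  have hschur : scalar n x - (x - η)⁻¹ • (-Bᵀ * -B)
      = (x - η)⁻¹ • (scalar n (x * (x - η)) - Bᵀ * B) := by
    simp only [scalar_apply, ← smul_one_eq_diagonal, Matrix.neg_mul, Matrix.mul_neg, neg_neg,
      smul_sub, smul_smul, inv_mul_cancel_left₀ hxη, mul_comm x]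
  rw [eval_charpoly, hblocks, det_fromBlocks_smul_one₁₁ hxη, hschur, det_smul, ← eval_charpoly,
    inv_pow, ← mul_assoc, ← pow_sub₀ _ hxη hmn]
end

theorem sub_mul_sub_quadratic_roots {η μ : ℝ} (h : 0 ≤ 4 * μ + η ^ 2) (x : ℝ) :
    (x - (η + √(4 * μ + η ^ 2)) / 2) * (x - (η - √(4 * μ + η ^ 2)) / 2) = x * (x - η) - μ := by
  linear_combination (-1 / 4 : ℝ) * Real.sq_sqrt h

section
variable {m n : Type*} [Fintype m] [Fintype n] [DecidableEq m] [DecidableEq n]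

theorem Matrix.IsHermitian.eigenvalues_eq_of_charpoly_eq {A : Matrix n n ℝ} (hA : A.IsHermitian)
    {s : Multiset ℝ} (h : A.charpoly = (s.map fun a => X - C a).prod) :
    Finset.univ.val.map hA.eigenvalues = s := by
  simpa [h, roots_multiset_prod_X_sub_C] using hA.roots_charpoly_eq_eigenvalues.symm

theorem Matrix.eigenvalues_fromBlocks_transpose {η : ℝ} {B : Matrix m n ℝ}
    (hmn : Fintype.card n ≤ Fintype.card m) (hBtB : (Bᵀ * B).IsHermitian)
    (hW : (fromBlocks (η • 1) B Bᵀ 0).IsHermitian) :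
    Finset.univ.val.map hW.eigenvalues
      = Multiset.replicate (Fintype.card m - Fintype.card n) η
        + (Finset.univ.val.map hBtB.eigenvalues).map (fun μ => (η + √(4 * μ + η ^ 2)) / 2)
        + (Finset.univ.val.map hBtB.eigenvalues).map (fun μ => (η - √(4 * μ + η ^ 2)) / 2) := by
  have hBtB_psd : (Bᵀ * B).PosSemidef := by
    simpa using posSemidef_conjTranspose_mul_self B
  refine hW.eigenvalues_eq_of_charpoly_eq (eq_of_eval_eq_of_ne η fun x hx => ?_)
  rw [eval_charpoly_fromBlocks_transpose hx B hmn, hBtB.charpoly_eq, eval_prod, eval_multiset_prod]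
  simp only [Multiset.map_add, Multiset.prod_add, Multiset.map_map, Multiset.map_replicate,
    Multiset.prod_replicate, Function.comp_def, eval_sub, eval_X, eval_C, mul_assoc,
    ← Multiset.prod_map_mul, Finset.prod_eq_multiset_prod]
  congr 2
  refine Multiset.map_congr rfl fun i _ => ?_
  have hμ : 0 ≤ 4 * hBtB.eigenvalues i + η ^ 2 := by
    have := hBtB_psd.eigenvalues_nonneg i
    positivity
  rw [sub_mul_sub_quadratic_roots hμ, RCLike.ofReal_real_eq_id, id]
end

theorem Finset.map_univ_val_eq_add_replicate {ι β : Type*} [Fintype ι] [DecidableEq ι]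
    (s : Finset ι) {f : ι → β} {b : β} (hf : ∀ i ∉ s, f i = b) :
    univ.val.map f = s.val.map f + Multiset.replicate sᶜ.card b := by
  have hsplit : univ.val = s.val + sᶜ.val := by
    rw [← union_compl s, ← disjUnion_eq_union _ _ disjoint_compl_right]
    rfl
  rw [hsplit, Multiset.map_add, Multiset.map_congr rfl fun i hi => hf i (mem_compl.mp hi),
    Multiset.map_const']
  rfl

theorem stmt_10_general (m n r : ℕ) (hmn : n ≤ m) (hr : r ≤ n)
    (η : ℝ) (hη : 0 < η)
    (B : Matrix (Fin m) (Fin n) ℝ)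
    (σ : Fin n → ℝ) (hσnonneg : ∀ k, 0 ≤ σ k)
    (hBtB : (Bᵀ * B).IsHermitian)
    (hσ : Multiset.map (fun k => σ k ^ 2) Finset.univ.val
        = Multiset.map hBtB.eigenvalues Finset.univ.val)
    (hσpos : ∀ k : Fin n, 0 < σ k ↔ (k : ℕ) < n - r)
    (hW : (fromBlocks (η • (1 : Matrix (Fin m) (Fin m) ℝ)) B Bᵀ
        (0 : Matrix (Fin n) (Fin n) ℝ)).IsHermitian) :
    Multiset.map hW.eigenvalues Finset.univ.val
      = Multiset.replicate r (0 : ℝ)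
        + Multiset.replicate (m - n + r) η
        + Multiset.map (fun k => (η + Real.sqrt (4 * σ k ^ 2 + η ^ 2)) / 2)
            (Finset.univ.filter fun k : Fin n => (k : ℕ) < n - r).val
        + Multiset.map (fun k => (η - Real.sqrt (4 * σ k ^ 2 + η ^ 2)) / 2)
            (Finset.univ.filter fun k : Fin n => (k : ℕ) < n - r).val := by
  set F := Finset.univ.filter fun k : Fin n => (k : ℕ) < n - r
  have hσ_zero : ∀ k ∉ F, σ k ^ 2 = 0 := fun k hk => by
    have hσk : σ k ≤ 0 := not_lt.mp fun h => hk (by simpa [F] using (hσpos k).mp h)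
    simp [le_antisymm hσk (hσnonneg k)]
  have hcard : Fᶜ.card = r := by
    rw [Finset.card_compl, Fintype.card_fin, Fin.card_filter_val_lt]
    omega
  rw [eigenvalues_fromBlocks_transpose (by simpa using hmn) hBtB hW, ← hσ,
    Finset.map_univ_val_eq_add_replicate F hσ_zero, hcard]
  simp only [Multiset.map_add, Multiset.map_map, Multiset.map_replicate, Function.comp_def,
    Fintype.card_fin]
  simp only [mul_zero, zero_add, Real.sqrt_sq hη.le, add_self_div_two, sub_self, zero_div,
    Multiset.replicate_add]
  abel

theorem stmt_10 (m n r : ℕ) (hmn : n ≤ m) (hr : r ≤ n)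
    (η : ℝ) (hη : 0 < η)
    (B : Matrix (Fin m) (Fin n) ℝ)
    (hrank : B.rank = n - r)
    (σ : Fin n → ℝ) (hσmono : Antitone σ) (hσnonneg : ∀ k, 0 ≤ σ k)
    (hBtB : (Bᵀ * B).IsHermitian)
    (hσ : Multiset.map (fun k => σ k ^ 2) Finset.univ.val
        = Multiset.map hBtB.eigenvalues Finset.univ.val)
    (hσpos : ∀ k : Fin n, 0 < σ k ↔ (k : ℕ) < n - r)
    (hW : (fromBlocks (η • (1 : Matrix (Fin m) (Fin m) ℝ)) B Bᵀ
        (0 : Matrix (Fin n) (Fin n) ℝ)).IsHermitian) :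
    Multiset.map hW.eigenvalues Finset.univ.val
      = Multiset.replicate r (0 : ℝ)
        + Multiset.replicate (m - n + r) η
        + Multiset.map (fun k => (η + Real.sqrt (4 * σ k ^ 2 + η ^ 2)) / 2)
            (Finset.univ.filter fun k : Fin n => (k : ℕ) < n - r).val
        + Multiset.map (fun k => (η - Real.sqrt (4 * σ k ^ 2 + η ^ 2)) / 2)
            (Finset.univ.filter fun k : Fin n => (k : ℕ) < n - r).val :=
  stmt_10_general m n r hmn hr η hη B σ hσnonneg hBtB hσ hσpos hW
end

section
/- Let η > 0, let B ∈ ℝ^{m×n} be a nonzero matrix with m ≥ n, and let W = [[ηI, B], [Bᵀ, O]] be the (m+n)×(m+n) real symmetric block matrix where I is the m×m identity matrix and O is the n×n zero matrix. Let σ_1 = σ_max(B) be the largest singular value of B. Then λ_max(W) = ½(η + √(4σ_1² + η²)), λ_min(W) = ½(η − √(4σ_1² + η²)), and consequently ρ(W) = λ_max(W), i.e., W possesses the quasi-Perron-Frobenius property. -/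
open Matrix

/-- The largest singular value of a real `m × n` matrix, i.e. the operator norm of the
associated linear map between Euclidean spaces. -/
noncomputable def sigmaMax {m n : ℕ} (B : Matrix (Fin m) (Fin n) ℝ) : ℝ :=
  ‖LinearMap.toContinuousLinearMap (Matrix.toEuclideanLin B)‖


/-! Write `σ = ‖B‖` for the `ℓ²` operator norm of `B`, which is `sigmaMax B`. An eigenvector
`(x, y)` of `W` for `λ` satisfies `B y = (λ - η) x` and `Bᵀ x = λ y`, hence
`‖B y‖² = λ (λ - η) ‖y‖² ≤ σ² ‖y‖²`; so every eigenvalue satisfies `λ (λ - η) ≤ σ²`, i.e. lies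
between the roots `(η ± √(4σ² + η²)) / 2` of `λ² = η λ + σ²`. Conversely `σ² = ‖Bᵀ B‖` is the
largest eigenvalue of `Bᵀ B`, and for an eigenvector `v` of it and either root `λ`, the vector
`(λ B v, σ² v)` is an eigenvector of `W` for `λ`. As `η > 0`, the positive root dominates the
absolute value of the negative one. -/

open scoped Matrix.Norms.L2Operator

theorem sigmaMax_eq_l2_opNorm {m n : ℕ} (B : Matrix (Fin m) (Fin n) ℝ) : sigmaMax B = ‖B‖ :=
  rfl

theorem maxEig_eq_of_isGreatest {k : Type*} [Fintype k] [DecidableEq k] {M : Matrix k k ℝ}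
    (hM : M.IsHermitian) {b : ℝ} (h : IsGreatest (Set.range hM.eigenvalues) b) :
    maxEig hM = b :=
  h.csSup_eq

theorem minEig_eq_of_isLeast {k : Type*} [Fintype k] [DecidableEq k] {M : Matrix k k ℝ}
    (hM : M.IsHermitian) {a : ℝ} (h : IsLeast (Set.range hM.eigenvalues) a) :
    minEig hM = a :=
  h.csInf_eq

theorem specRad_eq_of_isGreatest {k : Type*} [Fintype k] [DecidableEq k] {M : Matrix k k ℝ}
    (hM : M.IsHermitian) {b : ℝ} (h : IsGreatest (Set.range fun i => |hM.eigenvalues i|) b) :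
    specRad hM = b :=
  h.csSup_eq

theorem Real.mem_Icc_of_mul_sub_le {η c t : ℝ} (h : t * (t - η) ≤ c) :
    t ∈ Set.Icc ((η - √(4 * c + η ^ 2)) / 2) ((η + √(4 * c + η ^ 2)) / 2) := by
  have habs : |2 * t - η| ≤ √(4 * c + η ^ 2) := Real.abs_le_sqrt (by nlinarith)
  constructor <;> linarith [abs_le.mp habs]

namespace Matrix

section Spectral

variable {𝕜 : Type*} [RCLike 𝕜] {m n : Type*} [Fintype m] [Fintype n] [DecidableEq n]

theorem IsHermitian.exists_eigenvalues_eq_of_mulVec_eq {A : Matrix n n 𝕜} (hA : A.IsHermitian)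
    {v : n → 𝕜} {t : ℝ} (hv : v ≠ 0) (hAv : A *ᵥ v = t • v) : ∃ i, hA.eigenvalues i = t := by
  have hvec : Module.End.HasEigenvector (toLin' A) (algebraMap ℝ 𝕜 t) v :=
    Module.End.hasEigenvector_iff.mpr
      ⟨Module.End.mem_eigenspace_iff.mpr (by rw [toLin'_apply, hAv, algebraMap_smul]), hv⟩
  have hspec : t ∈ spectrum ℝ A := by
    rw [← spectrum.algebraMap_mem_iff 𝕜, ← spectrum_toLin',
      ← Module.End.hasEigenvalue_iff_mem_spectrum]
    exact Module.End.hasEigenvalue_of_hasEigenvector hvec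
  rwa [hA.spectrum_real_eq_range_eigenvalues] at hspec

theorem IsHermitian.eigenvectorBasis_ne_zero {A : Matrix n n 𝕜} (hA : A.IsHermitian) (i : n) :
    ⇑(hA.eigenvectorBasis i) ≠ 0 :=
  (WithLp.ofLp_eq_zero 2).ne.mpr (hA.eigenvectorBasis.orthonormal.ne_zero i)

theorem IsHermitian.l2_opNorm_eq_norm_eigenvalues {A : Matrix n n 𝕜} (hA : A.IsHermitian) :
    ‖A‖ = ‖hA.eigenvalues‖ := by
  conv_lhs => rw [hA.spectral_theorem]
  rw [Unitary.conjStarAlgAut_apply, ← Unitary.coe_star, CStarRing.norm_mul_coe_unitary,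
    CStarRing.norm_coe_unitary_mul, l2_opNorm_diagonal]
  exact ((algebraMap_isometry ℝ 𝕜).postcomp_pi).norm_map_of_map_zero (by ext; simp) _

theorem exists_conjTranspose_mul_self_mulVec_eq_l2_opNorm_sq [Nonempty n] (B : Matrix m n 𝕜) :
    ∃ v : n → 𝕜, v ≠ 0 ∧ (Bᴴ * B) *ᵥ v = (‖B‖ ^ 2) • v := by
  have hA := isHermitian_conjTranspose_mul_self B
  have hnonneg := eigenvalues_conjTranspose_mul_self_nonneg B
  obtain ⟨i, hi⟩ := Finite.exists_max hA.eigenvalues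
  have hnorm : ‖B‖ ^ 2 = hA.eigenvalues i := by
    rw [sq, ← l2_opNorm_conjTranspose_mul_self, hA.l2_opNorm_eq_norm_eigenvalues]
    refine le_antisymm ((pi_norm_le_iff_of_nonneg (hnonneg i)).mpr fun j => ?_)
      ((le_abs_self _).trans (norm_le_pi_norm hA.eigenvalues i))
    rw [Real.norm_of_nonneg (hnonneg j)]
    exact hi j
  exact ⟨_, hA.eigenvectorBasis_ne_zero i, hnorm ▸ hA.mulVec_eigenvectorBasis i⟩

end Spectral

variable {m n : Type*} [Fintype m] [Fintype n]

section FromBlocks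

variable [DecidableEq m] (η : ℝ) (B : Matrix m n ℝ)

theorem exists_fromBlocks_mulVec_eq_smul {v : n → ℝ} {c t : ℝ} (hv0 : v ≠ 0) (hc : c ≠ 0)
    (hv : (Bᵀ * B) *ᵥ v = c • v) (ht : t ^ 2 = η * t + c) :
    ∃ w ≠ 0, fromBlocks (η • 1) B Bᵀ 0 *ᵥ w = t • w := by
  refine ⟨Sum.elim (t • B *ᵥ v) (c • v), fun h => smul_ne_zero hc hv0 ?_, ?_⟩
  · simpa using congrArg (· ∘ Sum.inr) h
  ext (i | j)
  · simp only [fromBlocks_mulVec, smul_mulVec, one_mulVec, mulVec_smul, Sum.elim_inl,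
      Sum.elim_comp_inl, Sum.elim_comp_inr, Pi.add_apply, Pi.smul_apply, smul_eq_mul]
    linear_combination (B *ᵥ v) i * ht.symm
  · simp only [fromBlocks_mulVec, zero_mulVec, add_zero, mulVec_smul, mulVec_mulVec, hv,
      Sum.elim_inr, Sum.elim_comp_inl, Pi.smul_apply, smul_eq_mul]

end FromBlocks

variable [DecidableEq n]

theorem dotProduct_mulVec_self_le (B : Matrix m n ℝ) (y : n → ℝ) :
    (B *ᵥ y) ⬝ᵥ (B *ᵥ y) ≤ ‖B‖ ^ 2 * (y ⬝ᵥ y) := by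
  have h := pow_le_pow_left₀ (norm_nonneg _) (B.l2_opNorm_mulVec (WithLp.toLp 2 y)) 2
  simpa [mul_pow, EuclideanSpace.real_norm_sq_eq, dotProduct, ← sq] using h

theorem mul_sub_le_l2_opNorm_sq_of_fromBlocks_mulVec_eq [DecidableEq m] (η : ℝ)
    (B : Matrix m n ℝ) {w : m ⊕ n → ℝ} {t : ℝ} (hw : w ≠ 0)
    (h : fromBlocks (η • 1) B Bᵀ 0 *ᵥ w = t • w) : t * (t - η) ≤ ‖B‖ ^ 2 := by
  obtain ⟨x, y, rfl⟩ : ∃ x y, w = Sum.elim x y := ⟨_, _, (Sum.elim_comp_inl_inr w).symm⟩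
  have htop : B *ᵥ y = (t - η) • x := funext fun i => by
    have := congrFun h (Sum.inl i)
    simp only [fromBlocks_mulVec, smul_mulVec, one_mulVec, Sum.elim_inl, Sum.elim_comp_inl,
      Sum.elim_comp_inr, Pi.add_apply, Pi.smul_apply, smul_eq_mul] at this ⊢
    linarith
  have hbot : Bᵀ *ᵥ x = t • y := funext fun j => by
    simpa [fromBlocks_mulVec] using congrFun h (Sum.inr j)
  by_cases hy : y = 0
  · have hx : x ≠ 0 := by rintro rfl; exact hw (by rw [hy, Sum.elim_zero_zero])
    have : t = η := by
      rw [hy, mulVec_zero, eq_comm, smul_eq_zero, sub_eq_zero] at htop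
      exact htop.resolve_right hx
    rw [this, sub_self, mul_zero]
    positivity
  · have hyy : 0 < y ⬝ᵥ y := by simpa using dotProduct_star_self_pos_iff.mpr hy
    have key : (B *ᵥ y) ⬝ᵥ (B *ᵥ y) = t * (t - η) * (y ⬝ᵥ y) :=
      calc (B *ᵥ y) ⬝ᵥ (B *ᵥ y) = (t - η) * ((Bᵀ *ᵥ x) ⬝ᵥ y) := by
            nth_rw 1 [htop]
            rw [smul_dotProduct, smul_eq_mul, dotProduct_mulVec, mulVec_transpose]
        _ = t * (t - η) * (y ⬝ᵥ y) := by
            rw [hbot, smul_dotProduct, smul_eq_mul]; ring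
    exact le_of_mul_le_mul_right (key ▸ dotProduct_mulVec_self_le B y) hyy

end Matrix

theorem stmt_11_general (m n : ℕ)
    (η : ℝ) (hη : 0 < η)
    (B : Matrix (Fin m) (Fin n) ℝ) (hB : B ≠ 0)
    (hW : (fromBlocks (η • (1 : Matrix (Fin m) (Fin m) ℝ)) B Bᵀ
        (0 : Matrix (Fin n) (Fin n) ℝ)).IsHermitian) :
    maxEig hW = (η + Real.sqrt (4 * sigmaMax B ^ 2 + η ^ 2)) / 2 ∧
    minEig hW = (η - Real.sqrt (4 * sigmaMax B ^ 2 + η ^ 2)) / 2 ∧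
    specRad hW = maxEig hW := by
  rw [sigmaMax_eq_l2_opNorm]
  set s := √(4 * ‖B‖ ^ 2 + η ^ 2)
  have hs : s ^ 2 = 4 * ‖B‖ ^ 2 + η ^ 2 := Real.sq_sqrt (by positivity)
  have hbounds (i) : hW.eigenvalues i ∈ Set.Icc ((η - s) / 2) ((η + s) / 2) :=
    Real.mem_Icc_of_mul_sub_le <| mul_sub_le_l2_opNorm_sq_of_fromBlocks_mulVec_eq η B
      (hW.eigenvectorBasis_ne_zero i) (hW.mulVec_eigenvectorBasis i)
  have : Nonempty (Fin n) := not_isEmpty_iff.mp fun _ => hB (Subsingleton.elim _ _)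
  obtain ⟨v, hv0, hv⟩ := exists_conjTranspose_mul_self_mulVec_eq_l2_opNorm_sq B
  rw [conjTranspose_eq_transpose_of_trivial] at hv
  have hroot (r : ℝ) (hr : r ^ 2 = η * r + ‖B‖ ^ 2) : r ∈ Set.range hW.eigenvalues := by
    obtain ⟨w, hw0, hw⟩ := exists_fromBlocks_mulVec_eq_smul η B hv0
      (pow_ne_zero 2 (norm_ne_zero_iff.mpr hB)) hv hr
    exact hW.exists_eigenvalues_eq_of_mulVec_eq hw0 hw
  have hmax : IsGreatest (Set.range hW.eigenvalues) ((η + s) / 2) :=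
    ⟨hroot _ (by linear_combination hs / 4), Set.forall_mem_range.mpr fun i => (hbounds i).2⟩
  have hmin : IsLeast (Set.range hW.eigenvalues) ((η - s) / 2) :=
    ⟨hroot _ (by linear_combination hs / 4), Set.forall_mem_range.mpr fun i => (hbounds i).1⟩
  have hrad : IsGreatest (Set.range fun i => |hW.eigenvalues i|) ((η + s) / 2) := by
    obtain ⟨i, hi⟩ := hmax.1
    refine ⟨⟨i, ?_⟩, Set.forall_mem_range.mpr fun j => ?_⟩
    · simp only [hi, abs_eq_self]
      positivity
    · exact abs_le.mpr ⟨by linarith [(hbounds j).1], (hbounds j).2⟩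
  rw [maxEig_eq_of_isGreatest hW hmax, minEig_eq_of_isLeast hW hmin,
    specRad_eq_of_isGreatest hW hrad]
  exact ⟨rfl, rfl, rfl⟩

theorem stmt_11 (m n : ℕ) (hmn : n ≤ m)
    (η : ℝ) (hη : 0 < η)
    (B : Matrix (Fin m) (Fin n) ℝ) (hB : B ≠ 0)
    (hW : (fromBlocks (η • (1 : Matrix (Fin m) (Fin m) ℝ)) B Bᵀ
        (0 : Matrix (Fin n) (Fin n) ℝ)).IsHermitian) :
    maxEig hW = (η + Real.sqrt (4 * sigmaMax B ^ 2 + η ^ 2)) / 2 ∧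
    minEig hW = (η - Real.sqrt (4 * sigmaMax B ^ 2 + η ^ 2)) / 2 ∧
    specRad hW = maxEig hW :=
  stmt_11_general m n η hη B hB hW
end

section
/- (Perron) Let M ∈ ℝ^{n×n} be a matrix all of whose entries are positive. Then: (a) the spectral radius ρ(M) is positive; (b) ρ(M) is an eigenvalue of M of algebraic multiplicity one; (c) there is a unique vector x = (x_1, ..., x_n)ᵀ ∈ ℝ^n with Mx = ρ(M)x and x_1 + ... + x_n = 1, and this vector has all entries positive; (d) |λ| < ρ(M) for every (complex) eigenvalue λ of M with λ ≠ ρ(M). -/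
/-!
A maximiser `u` of the Collatz–Wielandt function `x ↦ min_i (M x)_i / x_i` over the image under
`M` of the simplex is a positive eigenvector, with eigenvalue the maximum `r > 0`: if `M u ≥ r u`
were not an equality, one more application of `M` would make it strict in every coordinate. The
same for `Mᵀ` gives a positive left eigenvector `v`, and pairing with `u` shows its eigenvalue
is `r` too.

Every real `r`-eigenvector is a multiple of `u`: subtracting the largest multiple of `u` that keeps
it nonnegative leaves a nonnegative eigenvector with a zero entry, which must vanish since `M > 0`.
Hence the complex `r`-eigenspace is `ℂ u`. As `v` annihilates the range of `M - r` but not `u`,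
`ker (M - r)² = ker (M - r)`, so the algebraic multiplicity of `r` is one.

For a complex eigenpair `(μ, z)`, the triangle inequality gives `‖μ‖ |z| ≤ M |z|`, and pairing
with `v` yields `‖μ‖ ≤ r`. Applied to the still nonnegative matrix `M - ε • 1`, this gives
`‖μ - ε‖ ≤ r - ε`, which for `‖μ‖ = r` forces `μ = r`.
-/

open Matrix

/-- The spectral radius of a real square matrix: the supremum of the absolute values of
its complex eigenvalues (the spectrum of the matrix viewed over `ℂ`). -/
noncomputable def specRadC {n : ℕ} (M : Matrix (Fin n) (Fin n) ℝ) : ℝ :=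
  sSup ((fun z : ℂ => ‖z‖) '' spectrum ℂ (M.map Complex.ofReal))

open Finset Module.End

theorem Complex.eq_norm_of_norm_sub_ofReal_le {z : ℂ} {ε : ℝ} (hε : 0 < ε)
    (h : ‖z - ε‖ ≤ ‖z‖ - ε) : z = ‖z‖ := by
  have hsq : ‖z - ε‖ ^ 2 ≤ (‖z‖ - ε) ^ 2 := pow_le_pow_left₀ (norm_nonneg _) h 2
  rw [Complex.sq_norm, Complex.normSq_apply] at hsq
  have hz : ‖z‖ ^ 2 = z.re * z.re + z.im * z.im := by rw [Complex.sq_norm, Complex.normSq_apply]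
  simp only [Complex.sub_re, Complex.ofReal_re, Complex.sub_im, Complex.ofReal_im, sub_zero] at hsq
  have hre : ‖z‖ ≤ z.re := by nlinarith
  exact Complex.eq_coe_norm_of_nonneg
    (Complex.re_eq_norm.mp (le_antisymm (Complex.re_le_norm z) hre))

namespace Matrix

variable {ι : Type*} [Fintype ι]

theorem mulVec_apply_pos {M : Matrix ι ι ℝ} (hM : ∀ i j, 0 < M i j) {x : ι → ℝ}
    (hx : ∀ j, 0 ≤ x j) (hx₀ : x ≠ 0) (i : ι) : 0 < (M *ᵥ x) i := by
  obtain ⟨j, hj⟩ := Function.ne_iff.mp hx₀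
  exact Finset.sum_pos' (fun k _ => mul_nonneg (hM i k).le (hx k))
    ⟨j, mem_univ j, mul_pos (hM i j) ((hx j).lt_of_ne' hj)⟩

theorem pos_of_nonneg_of_mulVec_eq_smul {M : Matrix ι ι ℝ} (hM : ∀ i j, 0 < M i j)
    {x : ι → ℝ} {r : ℝ} (hx : ∀ j, 0 ≤ x j) (hx₀ : x ≠ 0) (hMx : M *ᵥ x = r • x) (i : ι) :
    0 < x i := by
  have h := mulVec_apply_pos hM hx hx₀ i
  rw [hMx, Pi.smul_apply, smul_eq_mul] at h
  exact (hx i).lt_of_ne fun h0 => by simp [← h0] at h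

theorem exists_eq_smul_of_mulVec_eq_smul {M : Matrix ι ι ℝ} (hM : ∀ i j, 0 < M i j)
    {u x : ι → ℝ} {r : ℝ} (hu : ∀ i, 0 < u i) (hMu : M *ᵥ u = r • u) (hMx : M *ᵥ x = r • x) :
    ∃ t : ℝ, x = t • u := by
  cases isEmpty_or_nonempty ι
  · exact ⟨0, Subsingleton.elim _ _⟩
  obtain ⟨i₀, hi₀⟩ := Finite.exists_min fun i => x i / u i
  set t := x i₀ / u i₀
  refine ⟨t, sub_eq_zero.mp ?_⟩
  by_contra hy
  have hy_nonneg : ∀ i, 0 ≤ (x - t • u) i := fun i => by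
    simpa [sub_nonneg, ← le_div_iff₀ (hu i)] using hi₀ i
  have hMy : M *ᵥ (x - t • u) = r • (x - t • u) := by
    rw [mulVec_sub, mulVec_smul, hMx, hMu, smul_sub, smul_comm]
  have := pos_of_nonneg_of_mulVec_eq_smul hM hy_nonneg hy hMy i₀
  simp [t, div_mul_cancel₀ _ (hu i₀).ne'] at this

section Nonempty

variable [Nonempty ι]

noncomputable def collatzWielandt (M : Matrix ι ι ℝ) (x : ι → ℝ) : ℝ :=
  univ.inf' univ_nonempty fun i => (M *ᵥ x) i / x i

theorem le_collatzWielandt_iff {M : Matrix ι ι ℝ} {x : ι → ℝ} (hx : ∀ i, 0 < x i) {t : ℝ} :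
    t ≤ collatzWielandt M x ↔ ∀ i, t * x i ≤ (M *ᵥ x) i := by
  simp [collatzWielandt, le_div_iff₀ (hx _)]

theorem lt_collatzWielandt_iff {M : Matrix ι ι ℝ} {x : ι → ℝ} (hx : ∀ i, 0 < x i) {t : ℝ} :
    t < collatzWielandt M x ↔ ∀ i, t * x i < (M *ᵥ x) i := by
  simp [collatzWielandt, lt_div_iff₀ (hx _)]

theorem collatzWielandt_smul (M : Matrix ι ι ℝ) (x : ι → ℝ) {c : ℝ} (hc : c ≠ 0) :
    collatzWielandt M (c • x) = collatzWielandt M x := by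
  simp only [collatzWielandt, mulVec_smul, Pi.smul_apply, smul_eq_mul, mul_div_mul_left _ _ hc]

theorem exists_pos_eigenvector_of_pos {M : Matrix ι ι ℝ} (hM : ∀ i j, 0 < M i j) :
    ∃ r : ℝ, 0 < r ∧ ∃ u : ι → ℝ, (∀ i, 0 < u i) ∧ ∑ i, u i = 1 ∧ M *ᵥ u = r • u := by
  classical
  have hpos : ∀ x ∈ stdSimplex ℝ ι, ∀ i, 0 < (M *ᵥ x) i := fun x hx =>
    mulVec_apply_pos hM hx.1 fun h => by simpa [h] using hx.2
  have hcont : ContinuousOn (fun x => collatzWielandt M (M *ᵥ x)) (stdSimplex ℝ ι) := by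
    refine ContinuousOn.finset_inf'_apply _ fun i _ => ContinuousOn.div (by fun_prop) (by fun_prop)
      fun x hx => (hpos x hx i).ne'
  obtain ⟨x, hx, hmax⟩ := (isCompact_stdSimplex ℝ ι).exists_isMaxOn
    ⟨_, single_mem_stdSimplex ℝ (Classical.arbitrary ι)⟩ hcont
  set y := M *ᵥ x
  set r := collatzWielandt M y
  have hy : ∀ i, 0 < y i := hpos x hx
  have hy₀ : y ≠ 0 := fun h => by simpa [h] using hy (Classical.arbitrary ι)
  have hsum : 0 < ∑ i, y i := Finset.sum_pos (fun i _ => hy i) univ_nonempty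
  have hMy : M *ᵥ y = r • y := by
    by_contra hne
    have hw : ∀ i, 0 ≤ (M *ᵥ y - r • y) i := fun i => by
      simpa using (le_collatzWielandt_iff hy).mp le_rfl i
    have hx' : (∑ i, y i)⁻¹ • y ∈ stdSimplex ℝ ι :=
      ⟨fun i => mul_nonneg (inv_pos.mpr hsum).le (hy i).le,
        by simp [← Finset.mul_sum, hsum.ne']⟩
    have hle : collatzWielandt M (M *ᵥ ((∑ i, y i)⁻¹ • y)) ≤ r := hmax hx'
    refine hle.not_gt ?_
    simp only [mulVec_smul, collatzWielandt_smul _ _ (inv_pos.mpr hsum).ne']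
    refine (lt_collatzWielandt_iff (mulVec_apply_pos hM (fun i => (hy i).le) hy₀)).mpr fun i => ?_
    have := mulVec_apply_pos hM hw (sub_ne_zero.mpr hne) i
    simpa [mulVec_sub, mulVec_smul] using this
  have hr : 0 < r := by
    have := mulVec_apply_pos hM (fun i => (hy i).le) hy₀ (Classical.arbitrary ι)
    rw [hMy] at this
    exact pos_of_mul_pos_left this (hy _).le
  refine ⟨r, hr, (∑ i, y i)⁻¹ • y, fun i => mul_pos (inv_pos.mpr hsum) (hy i), ?_, ?_⟩
  · simp [← Finset.mul_sum, hsum.ne']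
  · rw [mulVec_smul, hMy, smul_comm]

end Nonempty

theorem eq_of_mulVec_eq_smul_of_vecMul_eq_smul {R : Type*} [CommRing R] [IsDomain R]
    {M : Matrix ι ι R} {u v : ι → R} {r s : R} (hu : M *ᵥ u = r • u) (hv : v ᵥ* M = s • v)
    (hvu : v ⬝ᵥ u ≠ 0) : r = s := by
  have h := dotProduct_mulVec v M u
  rw [hu, hv, dotProduct_smul, smul_dotProduct, smul_eq_mul, smul_eq_mul] at h
  exact mul_right_cancel₀ hvu h

theorem map_ofReal_mulVec {m : Type*} (M : Matrix m ι ℝ) (x : ι → ℝ) :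
    M.map (↑) *ᵥ (fun i => (x i : ℂ)) = fun i => ((M *ᵥ x) i : ℂ) := by
  ext i; simp [mulVec, dotProduct]

theorem vecMul_map_ofReal {m : Type*} (M : Matrix ι m ℝ) (x : ι → ℝ) :
    (fun i => (x i : ℂ)) ᵥ* M.map (↑) = fun i => ((x ᵥ* M) i : ℂ) := by
  ext i; simp [vecMul, dotProduct]

theorem re_map_ofReal_mulVec {m : Type*} (M : Matrix m ι ℝ) (z : ι → ℂ) (i : m) :
    ((M.map (↑) *ᵥ z) i).re = (M *ᵥ fun j => (z j).re) i := by
  simp [mulVec, dotProduct, Complex.re_sum]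

theorem im_map_ofReal_mulVec {m : Type*} (M : Matrix m ι ℝ) (z : ι → ℂ) (i : m) :
    ((M.map (↑) *ᵥ z) i).im = (M *ᵥ fun j => (z j).im) i := by
  simp [mulVec, dotProduct, Complex.im_sum]

theorem norm_le_of_vecMul_eq_smul {M : Matrix ι ι ℝ} (hM : ∀ i j, 0 ≤ M i j) {v : ι → ℝ}
    {r : ℝ} (hv : ∀ i, 0 < v i) (hvM : v ᵥ* M = r • v) {z : ι → ℂ} {μ : ℂ} (hz : z ≠ 0)
    (hMz : M.map (↑) *ᵥ z = μ • z) : ‖μ‖ ≤ r := by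
  set m : ι → ℝ := fun i => ‖z i‖
  have htri : ‖μ‖ • m ≤ M *ᵥ m := fun i => calc
    ‖μ‖ * ‖z i‖ = ‖∑ j, (M i j : ℂ) * z j‖ := by
      rw [← norm_mul, ← smul_eq_mul, ← Pi.smul_apply, ← hMz]; rfl
    _ ≤ ∑ j, ‖(M i j : ℂ) * z j‖ := norm_sum_le _ _
    _ = (M *ᵥ m) i := by simp [mulVec, dotProduct, m, abs_of_nonneg (hM i _)]
  have hvm : 0 < v ⬝ᵥ m := by
    obtain ⟨j, hj⟩ := Function.ne_iff.mp hz
    exact Finset.sum_pos' (fun i _ => mul_nonneg (hv i).le (norm_nonneg _))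
      ⟨j, mem_univ j, mul_pos (hv j) (norm_pos_iff.mpr hj)⟩
  refine le_of_mul_le_mul_right ?_ hvm
  calc ‖μ‖ * (v ⬝ᵥ m) = v ⬝ᵥ (‖μ‖ • m) := by rw [dotProduct_smul, smul_eq_mul]
    _ ≤ v ⬝ᵥ (M *ᵥ m) := dotProduct_le_dotProduct_of_nonneg_left htri fun i => (hv i).le
    _ = r * (v ⬝ᵥ m) := by rw [dotProduct_mulVec, hvM, smul_dotProduct, smul_eq_mul]

variable [DecidableEq ι]

theorem mem_spectrum_iff_exists_mulVec_eq_smul {K : Type*} [Field K]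
    {A : Matrix ι ι K} {μ : K} : μ ∈ spectrum K A ↔ ∃ z ≠ 0, A *ᵥ z = μ • z := by
  simp [← spectrum_toLin', ← Module.End.hasEigenvalue_iff_mem_spectrum,
    Module.End.hasEigenvalue_iff, Submodule.ne_bot_iff, and_comm]

theorem norm_lt_of_vecMul_eq_smul {M : Matrix ι ι ℝ} (hM : ∀ i j, 0 < M i j)
    {v : ι → ℝ} {r : ℝ} (hv : ∀ i, 0 < v i) (hvM : v ᵥ* M = r • v) {z : ι → ℂ} {μ : ℂ}
    (hz : z ≠ 0) (hMz : M.map (↑) *ᵥ z = μ • z) (hμ : μ ≠ r) : ‖μ‖ < r := by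
  have : Nonempty ι := ⟨(Function.ne_iff.mp hz).choose⟩
  obtain ⟨i₀, hi₀⟩ := Finite.exists_min fun i => M i i
  set ε := M i₀ i₀
  have hM' : ∀ i j, 0 ≤ (M - ε • 1) i j := fun i j => by
    rcases eq_or_ne i j with rfl | hij
    · simpa using hi₀ i
    · simpa [one_apply_ne hij] using (hM i j).le
  have hvM' : v ᵥ* (M - ε • 1) = (r - ε) • v := by
    rw [vecMul_sub, vecMul_smul, vecMul_one, hvM, sub_smul]
  have hMz' : (M - ε • 1).map (↑) *ᵥ z = (μ - ε) • z := by
    rw [Matrix.map_sub, Matrix.map_smul, Matrix.map_one, sub_mulVec, smul_mulVec, one_mulVec, hMz,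
      sub_smul]
    all_goals simp
  have hle := norm_le_of_vecMul_eq_smul (fun i j => (hM i j).le) hv hvM hz hMz
  refine hle.lt_of_ne fun h => hμ ?_
  have hshift := norm_le_of_vecMul_eq_smul hM' hv hvM' hz hMz'
  rw [← h] at hshift
  rw [Complex.eq_norm_of_norm_sub_ofReal_le (hM i₀ i₀) hshift, h]

theorem eigenspace_toLin'_map_ofReal {M : Matrix ι ι ℝ} (hM : ∀ i j, 0 < M i j)
    {u : ι → ℝ} {r : ℝ} (hu : ∀ i, 0 < u i) (hMu : M *ᵥ u = r • u) :
    eigenspace (toLin' (M.map (↑))) (r : ℂ) = ℂ ∙ fun i => (u i : ℂ) := by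
  refine le_antisymm (fun z hz => ?_) ?_
  · rw [mem_eigenspace_iff, toLin'_apply] at hz
    have hre : M *ᵥ (fun j => (z j).re) = r • fun j => (z j).re := funext fun i => by
      simpa [re_map_ofReal_mulVec] using congrArg Complex.re (congrFun hz i)
    have him : M *ᵥ (fun j => (z j).im) = r • fun j => (z j).im := funext fun i => by
      simpa [im_map_ofReal_mulVec] using congrArg Complex.im (congrFun hz i)
    obtain ⟨a, ha⟩ := exists_eq_smul_of_mulVec_eq_smul hM hu hMu hre
    obtain ⟨b, hb⟩ := exists_eq_smul_of_mulVec_eq_smul hM hu hMu him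
    refine Submodule.mem_span_singleton.mpr ⟨a + b * Complex.I, funext fun i => ?_⟩
    apply Complex.ext
    · simpa using (congrFun ha i).symm
    · simpa using (congrFun hb i).symm
  · rw [Submodule.span_singleton_le_iff_mem, mem_eigenspace_iff, toLin'_apply,
      map_ofReal_mulVec, hMu]
    ext i; simp

theorem maxGenEigenspace_toLin'_eq_eigenspace {K : Type*} [Field K] {A : Matrix ι ι K} {r : K}
    {v : ι → K} (hv : v ᵥ* A = r • v)
    (hker : ∀ x ∈ eigenspace (toLin' A) r, v ⬝ᵥ x = 0 → x = 0) :
    maxGenEigenspace (toLin' A) r = eigenspace (toLin' A) r := by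
  set g := toLin' A - r • 1
  have hg : ∀ x, v ⬝ᵥ g x = 0 := fun x => by
    simp [g, dotProduct_sub, dotProduct_mulVec, hv]
  have key : ∀ k x, (g ^ k) x = 0 → g x = 0 := by
    intro k
    induction k with
    | zero => simp
    | succ k ih =>
      intro x hx
      rw [pow_succ, Module.End.mul_apply] at hx
      exact hker _ (by simpa [g, sub_eq_zero] using ih _ hx) (hg x)
  refine le_antisymm (fun x hx => ?_) eigenspace_le_maxGenEigenspace
  obtain ⟨k, hk⟩ := (mem_maxGenEigenspace _ _ _).mp hx
  simpa [g, sub_eq_zero] using key k x hk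

theorem rootMultiplicity_charpoly_eq_one {K : Type*} [Field K] {A : Matrix ι ι K} {r : K}
    {u v : ι → K} (hu : eigenspace (toLin' A) r = K ∙ u) (hv : v ᵥ* A = r • v)
    (hvu : v ⬝ᵥ u ≠ 0) : A.charpoly.rootMultiplicity r = 1 := by
  have hu₀ : u ≠ 0 := by rintro rfl; simp at hvu
  have hker : ∀ x ∈ eigenspace (toLin' A) r, v ⬝ᵥ x = 0 → x = 0 := by
    intro x hx hvx
    obtain ⟨c, rfl⟩ := Submodule.mem_span_singleton.mp (hu ▸ hx)
    rw [dotProduct_smul, smul_eq_mul, mul_eq_zero] at hvx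
    simp [hvx.resolve_right hvu]
  rw [← charpoly_toLin', ← LinearMap.finrank_maxGenEigenspace_eq,
    maxGenEigenspace_toLin'_eq_eigenspace hv hker, hu, finrank_span_singleton hu₀]

end Matrix

theorem stmt_14 (n : ℕ) (hn : 0 < n) (M : Matrix (Fin n) (Fin n) ℝ)
    (hM : ∀ i j, 0 < M i j) :
    -- (a)
    0 < specRadC M ∧
    -- (b) ρ(M) is an eigenvalue of algebraic multiplicity one
    (M.map Complex.ofReal).charpoly.roots.count ((specRadC M : ℝ) : ℂ) = 1 ∧
    -- (c) unique eigenvector with entries summing to one; it is positive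
    ((∃! x : Fin n → ℝ, M *ᵥ x = specRadC M • x ∧ ∑ i, x i = 1) ∧
      ∀ x : Fin n → ℝ, M *ᵥ x = specRadC M • x → ∑ i, x i = 1 → ∀ i, 0 < x i) ∧
    -- (d)
    ∀ z ∈ spectrum ℂ (M.map Complex.ofReal),
      z ≠ ((specRadC M : ℝ) : ℂ) → ‖z‖ < specRadC M := by
  have i₀ : Fin n := ⟨0, hn⟩
  have : Nonempty (Fin n) := ⟨i₀⟩
  obtain ⟨r, hr, u, hu, hu_sum, hMu⟩ := exists_pos_eigenvector_of_pos hM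
  obtain ⟨r', -, v, hv, -, hMv⟩ := exists_pos_eigenvector_of_pos (M := Mᵀ) fun i j => hM j i
  rw [mulVec_transpose] at hMv
  have hvu : 0 < v ⬝ᵥ u := Finset.sum_pos (fun i _ => mul_pos (hv i) (hu i)) univ_nonempty
  obtain rfl : r = r' := eq_of_mulVec_eq_smul_of_vecMul_eq_smul hMu hMv hvu.ne'
  have hu₀ : (fun i => (u i : ℂ)) ≠ 0 := fun h => (hu i₀).ne' (by simpa using congrFun h i₀)
  have hr_mem : (r : ℂ) ∈ spectrum ℂ (M.map Complex.ofReal) :=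
    mem_spectrum_iff_exists_mulVec_eq_smul.mpr ⟨_, hu₀, by rw [map_ofReal_mulVec, hMu]; ext; simp⟩
  have hρ : specRadC M = r := by
    refine IsGreatest.csSup_eq ⟨⟨r, hr_mem, by simp [hr.le]⟩, ?_⟩
    rintro _ ⟨μ, hμ, rfl⟩
    obtain ⟨z, hz, hMz⟩ := mem_spectrum_iff_exists_mulVec_eq_smul.mp hμ
    exact norm_le_of_vecMul_eq_smul (fun i j => (hM i j).le) hv hMv hz hMz
  have huniq : ∀ x, M *ᵥ x = r • x → ∑ i, x i = 1 → x = u := fun x hMx hx => by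
    obtain ⟨t, rfl⟩ := exists_eq_smul_of_mulVec_eq_smul hM hu hMu hMx
    simp_all [← Finset.mul_sum]
  rw [hρ]
  refine ⟨hr, ?_, ⟨⟨u, ⟨hMu, hu_sum⟩, fun x hx => huniq x hx.1 hx.2⟩,
    fun x hMx hx => huniq x hMx hx ▸ hu⟩, fun μ hμ hμr => ?_⟩
  · rw [Polynomial.count_roots]
    refine rootMultiplicity_charpoly_eq_one (eigenspace_toLin'_map_ofReal hM hu hMu)
      (v := fun i => (v i : ℂ)) ?_ ?_
    · rw [vecMul_map_ofReal, hMv]; ext; simp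
    · simp only [dotProduct]
      exact_mod_cast hvu.ne'
  · obtain ⟨z, hz, hMz⟩ := mem_spectrum_iff_exists_mulVec_eq_smul.mp hμ
    exact norm_lt_of_vecMul_eq_smul hM hv hMv hz hMz hμr
end
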